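/- If either (1) L(θ) − min L ≤ μ R² / 16 or (2) ‖∇L(θ)‖₂ ≤ μ R / 4, then the Newton step is bounded by ‖(∇²L(θ))⁻¹ ∇L(θ)‖₂² ≤ 8 (L(θ) − min L) / μ (Lemma 7, Norm Bound on Inverse Hessian and Gradient Product). -/

import Mathlib

open Matrix Filter
open scoped RealInnerProductSpace

/-- Quadratic form of a matrix viewed as an operator on Euclidean space. -/
noncomputable def hessQF {d : ℕ} (A : Matrix (Fin d) (Fin d) ℝ)
    (v : EuclideanSpace ℝ (Fin d)) : ℝ :=
  ⟪v, Matrix.toEuclideanLin A v⟫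

/-!
Near the minimiser the Hessian is at least `μ/2`, so along the ray from `θ*` through `θ` the
directional derivative grows past `μR/2` and `L` past `L θ* + μR²/4` before the distance `R`
is reached; since `L` is convex along the ray, either hypothesis forces `‖θ - θ*‖ ≤ R`.
Let `u = ∇²L(θ)⁻¹ ∇L(θ)` and `S = ⟪u, ∇L(θ)⟫ = uᵀ ∇²L(θ) u ≥ (μ/2) ‖u‖²`. Once `‖u‖ ≤ 2R`, the
Hessian on the segment from `θ` to `θ - u/2` is at most twice `∇²L(θ)`, so this damped Newton
step lowers `L` by at least `S/4`; hence `S ≤ 4 (L θ - min L)` and `‖u‖² ≤ 8 (L θ - min L)/μ`.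
The bound `‖u‖ ≤ 2R` is immediate under the gradient hypothesis, and under the gap hypothesis
follows from `S ≤ 4 (θ - θ*)ᵀ ∇²L(θ*) (θ - θ*) ≤ 16 (L θ - min L)`.
-/

open Set

section OneDim

variable {f f' f'' : ℝ → ℝ} {a b c : ℝ}

lemma mul_sub_le_sub_of_le_hasDerivAt (hf : ∀ t, HasDerivAt f (f' t) t) (hab : a ≤ b)
    (hc : ∀ t ∈ Icc a b, c ≤ f' t) : c * (b - a) ≤ f b - f a :=
  (convex_Icc a b).mul_sub_le_image_sub_of_le_deriv
    (fun t _ => (hf t).continuousAt.continuousWithinAt)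
    (fun t _ => (hf t).differentiableAt.differentiableWithinAt)
    (fun t ht => (hf t).deriv ▸ hc t (interior_subset ht))
    a (left_mem_Icc.2 hab) b (right_mem_Icc.2 hab) hab

lemma sub_le_mul_sub_of_hasDerivAt_le (hf : ∀ t, HasDerivAt f (f' t) t) (hab : a ≤ b)
    (hc : ∀ t ∈ Icc a b, f' t ≤ c) : f b - f a ≤ c * (b - a) := by
  have := mul_sub_le_sub_of_le_hasDerivAt (fun t => (hf t).neg) hab (c := -c)
    (fun t ht => neg_le_neg (hc t ht))
  simp only [Pi.neg_apply] at this
  linarith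

lemma taylor_lower_of_le_second_deriv (hf : ∀ t, HasDerivAt f (f' t) t)
    (hf' : ∀ t, HasDerivAt f' (f'' t) t) (hab : a ≤ b) (hc : ∀ t ∈ Icc a b, c ≤ f'' t) :
    f a + f' a * (b - a) + c * (b - a) ^ 2 / 2 ≤ f b := by
  have hq : ∀ t, HasDerivAt (fun s => f' a * (s - a) + c * (s - a) ^ 2 / 2)
      (f' a + c * (t - a)) t := fun t => by
    refine ((((hasDerivAt_id' t).sub_const a).const_mul (f' a)).fun_add
      (((((hasDerivAt_id' t).sub_const a).fun_pow 2).const_mul c).div_const 2)).congr_deriv ?_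
    ring
  have hg : ∀ t, HasDerivAt (fun s => f s - (f' a * (s - a) + c * (s - a) ^ 2 / 2))
      (f' t - (f' a + c * (t - a))) t := fun t => (hf t).sub (hq t)
  have hg_nonneg : ∀ t ∈ Icc a b, 0 ≤ f' t - (f' a + c * (t - a)) := fun t ht => by
    have := mul_sub_le_sub_of_le_hasDerivAt hf' ht.1 fun s hs => hc s ⟨hs.1, hs.2.trans ht.2⟩
    linarith
  have := mul_sub_le_sub_of_le_hasDerivAt hg hab hg_nonneg
  simp only [sub_self, mul_zero, ne_eq, OfNat.ofNat_ne_zero, not_false_eq_true, zero_pow,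
    zero_div] at this
  linarith

lemma taylor_upper_of_second_deriv_le (hf : ∀ t, HasDerivAt f (f' t) t)
    (hf' : ∀ t, HasDerivAt f' (f'' t) t) (hab : a ≤ b) (hc : ∀ t ∈ Icc a b, f'' t ≤ c) :
    f b ≤ f a + f' a * (b - a) + c * (b - a) ^ 2 / 2 := by
  have := taylor_lower_of_le_second_deriv (fun t => (hf t).neg) (fun t => (hf' t).neg) hab
    (c := -c) fun t ht => neg_le_neg (hc t ht)
  simp only [Pi.neg_apply] at this
  linarith

end OneDim

section Euclidean

variable {d : ℕ}

lemma hessQF_smul (A : Matrix (Fin d) (Fin d) ℝ) (s : ℝ) (v : EuclideanSpace ℝ (Fin d)) :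
    hessQF A (s • v) = s ^ 2 * hessQF A v := by
  simp only [hessQF, map_smul, real_inner_smul_left, real_inner_smul_right]
  ring

lemma Matrix.PosSemidef.hessQF_nonneg {A : Matrix (Fin d) (Fin d) ℝ} (hA : A.PosSemidef)
    (v : EuclideanSpace ℝ (Fin d)) : 0 ≤ hessQF A v :=
  (isPositive_toEuclideanLin_iff.mpr hA).inner_nonneg_right v

lemma Matrix.PosSemidef.two_mul_inner_le_hessQF_add {A : Matrix (Fin d) (Fin d) ℝ}
    (hA : A.PosSemidef) (x y : EuclideanSpace ℝ (Fin d)) :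
    2 * ⟪x, toEuclideanLin A y⟫ ≤ hessQF A x + hessQF A y := by
  have hsymm : ⟪y, toEuclideanLin A x⟫ = ⟪x, toEuclideanLin A y⟫ := by
    rw [← isSymmetric_toEuclideanLin_iff.mpr hA.1, real_inner_comm]
  have := hA.hessQF_nonneg (x - y)
  simp only [hessQF, map_sub, inner_sub_left, inner_sub_right] at this ⊢
  linarith

lemma toEuclideanLin_apply_inv_apply {A : Matrix (Fin d) (Fin d) ℝ} (hA : IsUnit A)
    (v : EuclideanSpace ℝ (Fin d)) : toEuclideanLin A (toEuclideanLin A⁻¹ v) = v := by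
  simp [toLpLin_apply, mulVec_mulVec, mul_nonsing_inv A ((isUnit_iff_isUnit_det A).mp hA)]

lemma norm_add_smul_sub_le {E : Type*} [SeminormedAddCommGroup E] [NormedSpace ℝ E]
    (a v : E) {t : ℝ} (ht : t ∈ Icc (0 : ℝ) 1) : ‖a + t • v - a‖ ≤ ‖v‖ := by
  rw [add_sub_cancel_left, norm_smul, Real.norm_of_nonneg ht.1]
  exact mul_le_of_le_one_left (norm_nonneg v) ht.2

lemma norm_add_smul_sub_add_le {E : Type*} [SeminormedAddCommGroup E] [NormedSpace ℝ E]
    (a v : E) {t : ℝ} (ht : t ∈ Icc (0 : ℝ) 1) : ‖a + t • v - (a + v)‖ ≤ ‖v‖ := by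
  rw [add_sub_add_left_eq_sub, show t • v - v = (t - 1) • v by rw [sub_smul, one_smul],
    norm_smul, Real.norm_eq_abs, abs_of_nonpos (by linarith [ht.2])]
  exact mul_le_of_le_one_left (norm_nonneg v) (by linarith [ht.1])

end Euclidean

section Hessian

variable {d : ℕ}

def IsHessian (L : EuclideanSpace ℝ (Fin d) → ℝ)
    (H : EuclideanSpace ℝ (Fin d) → Matrix (Fin d) (Fin d) ℝ) : Prop :=
  ∀ x, HasFDerivAt (gradient L) (LinearMap.toContinuousLinearMap (toEuclideanLin (H x))) x

def HessianStable (H : EuclideanSpace ℝ (Fin d) → Matrix (Fin d) (Fin d) ℝ) (R : ℝ) : Prop :=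
  ∀ θ θ' : EuclideanSpace ℝ (Fin d), ‖θ - θ'‖ ≤ R →
    ∀ v, (1/2) * hessQF (H θ') v ≤ hessQF (H θ) v ∧ hessQF (H θ) v ≤ 2 * hessQF (H θ') v

variable {L : EuclideanSpace ℝ (Fin d) → ℝ}
  {H : EuclideanSpace ℝ (Fin d) → Matrix (Fin d) (Fin d) ℝ}

lemma hasDerivAt_comp_add_smul (hL : Differentiable ℝ L) (a v : EuclideanSpace ℝ (Fin d))
    (t : ℝ) : HasDerivAt (fun s : ℝ => L (a + s • v)) ⟪gradient L (a + t • v), v⟫ t := by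
  have h := (hL (a + t • v)).hasGradientAt.hasFDerivAt.comp_hasDerivAt t
    (((hasDerivAt_id t).smul_const v).const_add a)
  simpa [Function.comp_def] using h

lemma IsHessian.hasDerivAt_inner_gradient (hH : IsHessian L H)
    (a v u : EuclideanSpace ℝ (Fin d)) (t : ℝ) :
    HasDerivAt (fun s : ℝ => ⟪gradient L (a + s • v), u⟫)
      ⟪toEuclideanLin (H (a + t • v)) v, u⟫ t := by
  have h := (hH (a + t • v)).comp_hasDerivAt t (((hasDerivAt_id t).smul_const v).const_add a)
  simpa [Function.comp_def] using h.inner ℝ (hasDerivAt_const t u)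

lemma IsHessian.hasDerivAt_inner_gradient_self (hH : IsHessian L H)
    (a v : EuclideanSpace ℝ (Fin d)) (t : ℝ) :
    HasDerivAt (fun s : ℝ => ⟪gradient L (a + s • v), v⟫) (hessQF (H (a + t • v)) v) t :=
  (hH.hasDerivAt_inner_gradient a v v t).congr_deriv (real_inner_comm _ _)

lemma IsHessian.taylor_lower (hL : Differentiable ℝ L) (hH : IsHessian L H)
    (a v : EuclideanSpace ℝ (Fin d)) {c : ℝ}
    (hc : ∀ t ∈ Icc (0 : ℝ) 1, c ≤ hessQF (H (a + t • v)) v) :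
    L a + ⟪gradient L a, v⟫ + c / 2 ≤ L (a + v) := by
  simpa using taylor_lower_of_le_second_deriv (hasDerivAt_comp_add_smul hL a v)
    (hH.hasDerivAt_inner_gradient_self a v) zero_le_one hc

lemma IsHessian.taylor_upper (hL : Differentiable ℝ L) (hH : IsHessian L H)
    (a v : EuclideanSpace ℝ (Fin d)) {C : ℝ}
    (hC : ∀ t ∈ Icc (0 : ℝ) 1, hessQF (H (a + t • v)) v ≤ C) :
    L (a + v) ≤ L a + ⟪gradient L a, v⟫ + C / 2 := by
  simpa using taylor_upper_of_second_deriv_le (hasDerivAt_comp_add_smul hL a v)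
    (hH.hasDerivAt_inner_gradient_self a v) zero_le_one hC

lemma IsHessian.norm_sub_le_of_sub_lt_or_norm_gradient_lt (hL : Differentiable ℝ L)
    (hH : IsHessian L H) (hpsd : ∀ x, (H x).PosSemidef) {θs θ : EuclideanSpace ℝ (Fin d)}
    (hgrad0 : gradient L θs = 0) {c R : ℝ} (hc : 0 ≤ c) (hR : 0 ≤ R)
    (hball : ∀ x, ‖x - θs‖ ≤ R → ∀ v, c * ‖v‖ ^ 2 ≤ hessQF (H x) v)
    (hθ : L θ - L θs < c * R ^ 2 / 2 ∨ ‖gradient L θ‖ < c * R) : ‖θ - θs‖ ≤ R := by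
  by_contra! hRT
  set T := ‖θ - θs‖
  have hT : 0 < T := hR.trans_lt hRT
  set e := T⁻¹ • (θ - θs)
  have he : ‖e‖ = 1 := by
    rw [norm_smul, norm_inv, Real.norm_of_nonneg hT.le, inv_mul_cancel₀ hT.ne']
  have hθ_eq : θs + T • e = θ := by simp [e, smul_smul, hT.ne']
  have hf := hasDerivAt_comp_add_smul hL θs e
  have hf' := hH.hasDerivAt_inner_gradient_self θs e
  have hnear : ∀ t ∈ Icc 0 R, c ≤ hessQF (H (θs + t • e)) e := fun t ht => by
    simpa [he] using hball _ (by simpa [norm_smul, he, abs_of_nonneg ht.1] using ht.2) e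
  have hfar : ∀ t ∈ Icc R T, 0 ≤ hessQF (H (θs + t • e)) e :=
    fun t _ => (hpsd _).hessQF_nonneg e
  have hslope_R := mul_sub_le_sub_of_le_hasDerivAt hf' hR hnear
  have hslope_T := mul_sub_le_sub_of_le_hasDerivAt hf' hRT.le hfar
  have hval_R := taylor_lower_of_le_second_deriv hf hf' hR hnear
  have hval_T := taylor_lower_of_le_second_deriv hf hf' hRT.le hfar
  simp only [zero_smul, add_zero, hθ_eq, hgrad0, inner_zero_left] at *
  rcases hθ with hgap | hgrad
  · have : 0 ≤ ⟪gradient L (θs + R • e), e⟫ * (T - R) :=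
      mul_nonneg (by nlinarith) (by linarith)
    nlinarith
  · have := real_inner_le_norm (gradient L θ) e
    rw [he] at this
    nlinarith

variable {R : ℝ} {θs θ : EuclideanSpace ℝ (Fin d)}

lemma IsHessian.hessQF_sub_le_four_mul_sub (hL : Differentiable ℝ L) (hH : IsHessian L H)
    (hstab : HessianStable H R) (hgrad0 : gradient L θs = 0) (hθR : ‖θ - θs‖ ≤ R) :
    hessQF (H θs) (θ - θs) ≤ 4 * (L θ - L θs) := by
  have hc : ∀ t ∈ Icc (0 : ℝ) 1,
      hessQF (H θs) (θ - θs) / 2 ≤ hessQF (H (θs + t • (θ - θs))) (θ - θs) := fun t ht => by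
    linarith [(hstab _ θs ((norm_add_smul_sub_le θs _ ht).trans hθR) (θ - θs)).1]
  have := hH.taylor_lower hL θs (θ - θs) hc
  rw [hgrad0, inner_zero_left, add_sub_cancel] at this
  linarith

lemma IsHessian.hessQF_le_four_mul_hessQF_sub (hH : IsHessian L H)
    (hpsd : ∀ x, (H x).PosSemidef) (hstab : HessianStable H R) (hgrad0 : gradient L θs = 0)
    (hθR : ‖θ - θs‖ ≤ R) {u : EuclideanSpace ℝ (Fin d)}
    (hu : toEuclideanLin (H θ) u = gradient L θ) :
    hessQF (H θ) u ≤ 4 * hessQF (H θs) (θ - θs) := by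
  set δ := θ - θs
  have hbound : ∀ t ∈ Icc (0 : ℝ) 1, ⟪toEuclideanLin (H (θs + t • δ)) δ, u⟫ ≤
      hessQF (H θ) u / 2 + 2 * hessQF (H θs) δ := fun t ht => by
    have hnear_θs := (norm_add_smul_sub_le θs δ ht).trans hθR
    have hnear_θ := (norm_add_smul_sub_add_le θs δ ht).trans hθR
    rw [add_sub_cancel] at hnear_θ
    -- AM–GM in the form `4 ⟪u, H' δ⟫ ≤ H'[u] + H'[2δ]`, then compare `H'` with `H θ` and `H θs`
    have hamgm := (hpsd (θs + t • δ)).two_mul_inner_le_hessQF_add u ((2 : ℝ) • δ)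
    rw [hessQF_smul, map_smul, real_inner_smul_right, real_inner_comm] at hamgm
    linarith [(hstab _ θ hnear_θ u).2, (hstab _ θs hnear_θs δ).2]
  have := sub_le_mul_sub_of_hasDerivAt_le (hH.hasDerivAt_inner_gradient θs δ u) zero_le_one hbound
  rw [one_smul, zero_smul, add_zero, add_sub_cancel, hgrad0, inner_zero_left, real_inner_comm,
    ← hu] at this
  simp only [hessQF] at this ⊢
  linarith

lemma IsHessian.hessQF_le_four_mul_sub_half_step (hL : Differentiable ℝ L) (hH : IsHessian L H)
    (hstab : HessianStable H R) {u : EuclideanSpace ℝ (Fin d)}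
    (hu : toEuclideanLin (H θ) u = gradient L θ) (huR : ‖u‖ ≤ 2 * R) :
    hessQF (H θ) u ≤ 4 * (L θ - L (θ - (2⁻¹ : ℝ) • u)) := by
  set v := -(2⁻¹ : ℝ) • u with hv_def
  have hC : ∀ t ∈ Icc (0 : ℝ) 1, hessQF (H (θ + t • v)) v ≤ hessQF (H θ) u / 2 := fun t ht => by
    have hnear : ‖θ + t • v - θ‖ ≤ R := (norm_add_smul_sub_le θ v ht).trans <| by
      rw [norm_smul, norm_neg, norm_inv, Real.norm_two]
      linarith
    have hv : hessQF (H θ) v = hessQF (H θ) u / 4 := by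
      rw [hessQF_smul]
      ring
    linarith [(hstab _ θ hnear v).2]
  have := hH.taylor_upper hL θ v hC
  rw [real_inner_smul_right, ← hu, real_inner_comm, show θ + v = θ - (2⁻¹ : ℝ) • u by
    rw [hv_def, neg_smul, ← sub_eq_add_neg]] at this
  simp only [hessQF] at this ⊢
  linarith

lemma IsHessian.norm_le_two_mul_of_sub_le_or_norm_gradient_le (hL : Differentiable ℝ L)
    (hH : IsHessian L H) (hpsd : ∀ x, (H x).PosSemidef) (hstab : HessianStable H R)
    (hgrad0 : gradient L θs = 0) (hθR : ‖θ - θs‖ ≤ R) {u : EuclideanSpace ℝ (Fin d)}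
    (hu : toEuclideanLin (H θ) u = gradient L θ) {μ : ℝ} (hμpos : 0 < μ) (hR : 0 < R)
    (hSu : μ / 2 * ‖u‖ ^ 2 ≤ hessQF (H θ) u)
    (hcond : L θ - L θs ≤ μ * R ^ 2 / 16 ∨ ‖gradient L θ‖ ≤ μ * R / 4) :
    ‖u‖ ≤ 2 * R := by
  refine (pow_le_pow_iff_left₀ (norm_nonneg u) (by positivity) two_ne_zero).mp ?_
  rcases hcond with hgap | hgrad
  · have := hH.hessQF_le_four_mul_hessQF_sub hpsd hstab hgrad0 hθR hu
    have := hH.hessQF_sub_le_four_mul_sub hL hstab hgrad0 hθR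
    nlinarith
  · have hS : hessQF (H θ) u ≤ ‖u‖ * (μ * R / 4) := by
      rw [hessQF, hu]
      exact (real_inner_le_norm u _).trans (mul_le_mul_of_nonneg_left hgrad (norm_nonneg u))
    have hu_half : ‖u‖ ≤ R / 2 := by
      by_contra! h
      nlinarith [mul_pos (mul_pos hμpos ((half_pos hR).trans h)) (sub_pos.2 h)]
    nlinarith [norm_nonneg u]

end Hessian

theorem stmt_8_general (d : ℕ)
    (L : EuclideanSpace ℝ (Fin d) → ℝ) (hL : ContDiff ℝ 2 L)
    (θs : EuclideanSpace ℝ (Fin d))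
    (hmin : ∀ θ, θ ≠ θs → L θs < L θ)
    (hgrad0 : gradient L θs = 0)
    (H : EuclideanSpace ℝ (Fin d) → Matrix (Fin d) (Fin d) ℝ)
    (hH : ∀ x, HasFDerivAt (gradient L)
      (LinearMap.toContinuousLinearMap (Matrix.toEuclideanLin (H x))) x)
    (hpd : ∀ x, (H x).PosDef)
    (μ : ℝ) (hμpos : 0 < μ)
    (hμlb : ∀ v : EuclideanSpace ℝ (Fin d), μ * ‖v‖ ^ 2 ≤ hessQF (H θs) v)
    (R : ℝ) (hR : 0 < R)
    (hA2 : ∀ θ θ' : EuclideanSpace ℝ (Fin d), ‖θ - θ'‖ ≤ R →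
      ∀ v, (1/2) * hessQF (H θ') v ≤ hessQF (H θ) v ∧
        hessQF (H θ) v ≤ 2 * hessQF (H θ') v)
    (θ : EuclideanSpace ℝ (Fin d))
    (hcond : L θ - L θs ≤ μ * R ^ 2 / 16 ∨ ‖gradient L θ‖ ≤ μ * R / 4) :
    ‖Matrix.toEuclideanLin ((H θ)⁻¹) (gradient L θ)‖ ^ 2 ≤
      8 * (L θ - L θs) / μ := by
  have hLd : Differentiable ℝ L := hL.differentiable (by norm_num)
  replace hH : IsHessian L H := hH
  replace hA2 : HessianStable H R := hA2
  have hpsd : ∀ x, (H x).PosSemidef := fun x => (hpd x).posSemidef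
  have hball : ∀ x, ‖x - θs‖ ≤ R → ∀ v, μ / 2 * ‖v‖ ^ 2 ≤ hessQF (H x) v :=
    fun x hx v => by linarith [(hA2 x θs hx v).1, hμlb v]
  have hθR : ‖θ - θs‖ ≤ R := hH.norm_sub_le_of_sub_lt_or_norm_gradient_lt hLd hpsd hgrad0
    (by positivity) hR.le hball (hcond.imp (fun h => by nlinarith [mul_pos hμpos (pow_pos hR 2)])
      (fun h => by nlinarith [mul_pos hμpos hR]))
  set u := toEuclideanLin (H θ)⁻¹ (gradient L θ)
  have hu : toEuclideanLin (H θ) u = gradient L θ :=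
    toEuclideanLin_apply_inv_apply (hpd θ).isUnit _
  have hSu : μ / 2 * ‖u‖ ^ 2 ≤ hessQF (H θ) u := hball θ hθR u
  have huR : ‖u‖ ≤ 2 * R :=
    hH.norm_le_two_mul_of_sub_le_or_norm_gradient_le hLd hpsd hA2 hgrad0 hθR hu hμpos hR hSu hcond
  have hmin_step : L θs ≤ L (θ - (2⁻¹ : ℝ) • u) := by
    rcases eq_or_ne (θ - (2⁻¹ : ℝ) • u) θs with h | h
    · rw [h]
    · exact (hmin _ h).le
  have := hH.hessQF_le_four_mul_sub_half_step hLd hA2 hu huR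
  rw [le_div_iff₀ hμpos]
  nlinarith

/-- Lemma 7 (Norm Bound on Inverse Hessian and Gradient Product) -/
theorem stmt_8 (d : ℕ) (hd : 1 ≤ d)
    (L : EuclideanSpace ℝ (Fin d) → ℝ) (hL : ContDiff ℝ 2 L)
    (hconv : StrictConvexOn ℝ Set.univ L)
    (θs : EuclideanSpace ℝ (Fin d))
    (hmin : ∀ θ, θ ≠ θs → L θs < L θ)
    (hgrad0 : gradient L θs = 0)
    (H : EuclideanSpace ℝ (Fin d) → Matrix (Fin d) (Fin d) ℝ)
    (hH : ∀ x, HasFDerivAt (gradient L)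
      (LinearMap.toContinuousLinearMap (Matrix.toEuclideanLin (H x))) x)
    (hpd : ∀ x, (H x).PosDef)
    (μ : ℝ) (hμpos : 0 < μ)
    (hμlb : ∀ v : EuclideanSpace ℝ (Fin d), μ * ‖v‖ ^ 2 ≤ hessQF (H θs) v)
    (hμeig : ∃ v : EuclideanSpace ℝ (Fin d), v ≠ 0 ∧
      Matrix.toEuclideanLin (H θs) v = μ • v)
    (R : ℝ) (hR : 0 < R)
    (hA2 : ∀ θ θ' : EuclideanSpace ℝ (Fin d), ‖θ - θ'‖ ≤ R →
      ∀ v, (1/2) * hessQF (H θ') v ≤ hessQF (H θ) v ∧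
        hessQF (H θ) v ≤ 2 * hessQF (H θ') v)
    (θ : EuclideanSpace ℝ (Fin d))
    (hcond : L θ - L θs ≤ μ * R ^ 2 / 16 ∨ ‖gradient L θ‖ ≤ μ * R / 4) :
    ‖Matrix.toEuclideanLin ((H θ)⁻¹) (gradient L θ)‖ ^ 2 ≤
      8 * (L θ - L θs) / μ :=
  stmt_8_general d L hL θs hmin hgrad0 H hH hpd μ hμpos hμlb R hR hA2 θ hcond
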